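/- There exists a constant c ≥ 0, depending only on (φ''_F, φ''_{2F}, ρ'_F, ρ'_{2F}, ρ''_F, ρ''_{2F}, G'_F, G''_F), such that the following holds: for all integers N, K with 3 ≤ K and K + 3 ≤ N, define the 2N-periodic sequence û by û_ℓ := (−1)^ℓ ε/(2√2) for |ℓ| ≤ K−1 and û_ℓ := 0 for K ≤ |ℓ| ≤ N (indices ℓ taken in the period {−N+1,…,N}). Then ‖Dû‖²_{ℓ²ε} = ε(K−1) + ε/4 and |Q^qnl(û)/‖Dû‖²_{ℓ²ε} − (φ''_F + 2G'_F ρ''_F)| ≤ c/K. -/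

import Mathlib

open Finset

noncomputable section

/-- `u` is `2N`-periodic. -/
def IsPer (N : ℤ) (u : ℤ → ℝ) : Prop := ∀ ℓ : ℤ, u (ℓ + 2*N) = u ℓ

/-- `u` belongs to the displacement space `U`: `2N`-periodic with zero mean. -/
def InU (N : ℤ) (u : ℤ → ℝ) : Prop :=
  IsPer N u ∧ ∑ ℓ ∈ Finset.Icc (-N+1) N, u ℓ = 0

/-- the scaled reference atomic spacing `ε = 1/N`. -/
def eps (N : ℤ) : ℝ := 1 / (N : ℝ)

/-- discrete derivative `(Dv)_ℓ = (v_ℓ - v_{ℓ-1})/ε`. -/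
def Dd (N : ℤ) (v : ℤ → ℝ) : ℤ → ℝ := fun ℓ => (v ℓ - v (ℓ-1)) / eps N

/-- squared `ℓ²ε` norm: `ε Σ_{ℓ=-N+1}^{N} v_ℓ²`. -/
def nrm2 (N : ℤ) (v : ℤ → ℝ) : ℝ := eps N * ∑ ℓ ∈ Finset.Icc (-N+1) N, (v ℓ)^2

/-- `Ã_F = φ''_F + 4φ''_{2F}`. -/
def Atil (pF p2F : ℝ) : ℝ := pF + 4*p2F

/-- `Â_F = 4G''_F(ρ'_F+2ρ'_{2F})² + 2G'_F(ρ''_F+4ρ''_{2F})`. -/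
def Ahat (rF r2F rrF rr2F g1 g2 : ℝ) : ℝ := 4*g2*(rF + 2*r2F)^2 + 2*g1*(rrF + 4*rr2F)

/-- `A_F = Â_F + Ã_F`. -/
def AFc (pF p2F rF r2F rrF rr2F g1 g2 : ℝ) : ℝ := Ahat rF r2F rrF rr2F g1 g2 + Atil pF p2F

/-- `B_F`. -/
def BFc (p2F rF r2F rr2F g1 g2 : ℝ) : ℝ :=
  -(p2F + g2*(rF^2 + 20*r2F^2 + 12*rF*r2F) + 2*g1*rr2F)

/-- `C_F`. -/
def CFc (rF r2F g2 : ℝ) : ℝ := g2*(8*r2F^2 + 2*rF*r2F)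

/-- `D_F`. -/
def DFc (r2F g2 : ℝ) : ℝ := -(g2*r2F^2)

/-- `λ_F(s) = A_F + B_F s + C_F s² + D_F s³`. -/
def lamF (pF p2F rF r2F rrF rr2F g1 g2 s : ℝ) : ℝ :=
  AFc pF p2F rF r2F rrF rr2F g1 g2 + BFc p2F rF r2F rr2F g1 g2 * s
    + CFc rF r2F g2 * s^2 + DFc r2F g2 * s^3

/-- per-atom atomistic contribution `q^a_ℓ(u)`. -/
def qaAtom (N : ℤ) (pF p2F rF r2F rrF rr2F g1 g2 : ℝ) (u : ℤ → ℝ) (ℓ : ℤ) : ℝ :=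
  g2 * (rF * (Dd N u ℓ + Dd N u (ℓ+1))
      + r2F * (Dd N u (ℓ-1) + Dd N u ℓ + Dd N u (ℓ+1) + Dd N u (ℓ+2)))^2
   + g1 * (rrF * (Dd N u ℓ)^2 + rr2F * (Dd N u ℓ + Dd N u (ℓ-1))^2
         + rrF * (Dd N u (ℓ+1))^2 + rr2F * (Dd N u (ℓ+1) + Dd N u (ℓ+2))^2)
   + (1/2) * (pF * ((Dd N u ℓ)^2 + (Dd N u (ℓ+1))^2)
         + p2F * ((Dd N u ℓ + Dd N u (ℓ-1))^2 + (Dd N u (ℓ+1) + Dd N u (ℓ+2))^2))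

/-- interfacial contribution `q^i` with index triple `(a,b,c)`. -/
def qiAtom (N : ℤ) (pF p2F rF r2F rrF rr2F g1 g2 : ℝ) (u : ℤ → ℝ) (a b c : ℤ) : ℝ :=
  2*g2*(rF * Dd N u b + r2F*(Dd N u b + Dd N u a))^2
  + g1*(rrF*(Dd N u b)^2 + rr2F*(Dd N u b + Dd N u a)^2)
  + (2*g2*(rF + 2*r2F)^2 + g1*(rrF + 4*rr2F))*(Dd N u c)^2
  + (1/2)*(pF*((Dd N u b)^2 + (Dd N u c)^2) + p2F*((Dd N u b + Dd N u a)^2 + 4*(Dd N u c)^2))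

/-- continuum contribution `q^c_ℓ(u) = (A_F/2)((u'_ℓ)² + (u'_{ℓ+1})²)`. -/
def qcAtom (N : ℤ) (pF p2F rF r2F rrF rr2F g1 g2 : ℝ) (u : ℤ → ℝ) (ℓ : ℤ) : ℝ :=
  (AFc pF p2F rF r2F rrF rr2F g1 g2 / 2) * ((Dd N u ℓ)^2 + (Dd N u (ℓ+1))^2)

/-- the QNL second-variation quadratic form `Q^qnl`. -/
def Qqnl (N K : ℤ) (pF p2F rF r2F rrF rr2F g1 g2 : ℝ) (u : ℤ → ℝ) : ℝ :=
  eps N * ((∑ ℓ ∈ Finset.Icc (-K) K, qaAtom N pF p2F rF r2F rrF rr2F g1 g2 u ℓ)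
    + qiAtom N pF p2F rF r2F rrF rr2F g1 g2 u K (K+1) (K+2)
    + qiAtom N pF p2F rF r2F rrF rr2F g1 g2 u (K+1) (K+2) (K+3)
    + qiAtom N pF p2F rF r2F rrF rr2F g1 g2 u (-K+1) (-K) (-K-1)
    + qiAtom N pF p2F rF r2F rrF rr2F g1 g2 u (-K) (-K-1) (-K-2)
    + ∑ ℓ ∈ (Finset.Icc (-N+1) (-K-3) ∪ Finset.Icc (K+3) N),
        qcAtom N pF p2F rF r2F rrF rr2F g1 g2 u ℓ)

/-- the oscillatory displacement supported in the atomistic region,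
extended `2N`-periodically: `û_ℓ = (-1)^ℓ ε/(2√2)` for `|ℓ| ≤ K-1` and `û_ℓ = 0`
for `K ≤ |ℓ| ≤ N`, indices taken in the period `{-N+1,…,N}`. -/
def uhatK (N K : ℤ) : ℤ → ℝ := fun ℓ =>
  if |(ℓ + (N-1)) % (2*N) - (N-1)| ≤ K - 1
  then (-1:ℝ)^((ℓ + (N-1)) % (2*N) - (N-1)) * eps N / (2 * Real.sqrt 2)
  else 0

/-!
On the bonds `-K+2, …, K-1` the derivative `Dû` alternates in sign with `(Dû)² = 1/2`, on the
two bonds `-K+1` and `K` it is half as large, and elsewhere it vanishes; hence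
`‖Dû‖² = ε(4K-3)/4`. Every atom with `|ℓ| ≤ K-3` then contributes `(φ''_F + 2G'_F ρ''_F)/2` to
`Q^qnl(û)`, the continuum region contributes nothing, and, `û` being even, the two interfaces
contribute the same amount, which does not depend on `K`. Therefore
`Q^qnl(û) = (φ''_F + 2G'_F ρ''_F)‖Dû‖² + ε δ/4` with `δ = interfaceDefect …`, and the Rayleigh
quotient equals `φ''_F + 2G'_F ρ''_F + δ/(4K-3)`.
-/

lemma neg_one_zpow_add_one (j : ℤ) : (-1 : ℝ) ^ (j + 1) = -(-1) ^ j := by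
  rw [zpow_add_one₀ (by norm_num), mul_neg_one]

lemma neg_one_zpow_sq (j : ℤ) : ((-1 : ℝ) ^ j) ^ 2 = 1 := by
  rw [← sq_abs, abs_neg_one_zpow, one_pow]

lemma sum_Icc_eq_of_forall_eq {a b : ℤ} (hab : a ≤ b + 1) {f : ℤ → ℝ} {c : ℝ}
    (hf : ∀ ℓ ∈ Icc a b, f ℓ = c) : ∑ ℓ ∈ Icc a b, f ℓ = ((b : ℝ) + 1 - a) * c := by
  rw [sum_congr rfl hf, sum_const, nsmul_eq_mul]
  congr 1
  exact_mod_cast Int.card_Icc_of_le a b hab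

lemma sum_Icc_neg_self_eq {K : ℤ} (hK : 3 ≤ K) (f : ℤ → ℝ) :
    ∑ ℓ ∈ Icc (-K) K, f ℓ = (f (-K) + f (-K + 1) + f (-K + 2))
      + ∑ ℓ ∈ Icc (-K + 3) (K - 3), f ℓ + (f (K - 2) + f (K - 1) + f K) := by
  have hsplit : Icc (-K) K = insert (-K) (insert (-K + 1) (insert (-K + 2)
      (insert (K - 2) (insert (K - 1) (insert K (Icc (-K + 3) (K - 3))))))) := by
    ext x
    simp only [mem_insert, mem_Icc]
    omega
  rw [hsplit]
  repeat rw [sum_insert (by simp only [mem_insert, mem_Icc]; omega)]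
  ring

lemma eps_ne_zero {N : ℤ} (hN : 0 < N) : eps N ≠ 0 := by
  rw [eps]
  positivity

section QuadraticForm

variable {N : ℤ} {pF p2F rF r2F rrF rr2F g1 g2 : ℝ} {u : ℤ → ℝ}

lemma qaAtom_of_alternating {ℓ : ℤ} (h₀ : Dd N u (ℓ - 1) = -Dd N u ℓ)
    (h₁ : Dd N u ℓ = -Dd N u (ℓ + 1)) (h₂ : Dd N u (ℓ + 1) = -Dd N u (ℓ + 2)) :
    qaAtom N pF p2F rF r2F rrF rr2F g1 g2 u ℓ = (pF + 2 * g1 * rrF) * Dd N u ℓ ^ 2 := by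
  rw [qaAtom, h₀, h₁, h₂]
  ring

lemma qaAtom_eq_of_reflect {ℓ m : ℤ} (h₀ : Dd N u (m - 1) = -Dd N u (ℓ + 2))
    (h₁ : Dd N u m = -Dd N u (ℓ + 1)) (h₂ : Dd N u (m + 1) = -Dd N u ℓ)
    (h₃ : Dd N u (m + 2) = -Dd N u (ℓ - 1)) :
    qaAtom N pF p2F rF r2F rrF rr2F g1 g2 u m = qaAtom N pF p2F rF r2F rrF rr2F g1 g2 u ℓ := by
  rw [qaAtom, qaAtom, h₀, h₁, h₂, h₃]
  ring

lemma qiAtom_eq_of_neg {a b c a' b' c' : ℤ} (ha : Dd N u a' = -Dd N u a)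
    (hb : Dd N u b' = -Dd N u b) (hc : Dd N u c' = -Dd N u c) :
    qiAtom N pF p2F rF r2F rrF rr2F g1 g2 u a' b' c' =
      qiAtom N pF p2F rF r2F rrF rr2F g1 g2 u a b c := by
  rw [qiAtom, qiAtom, ha, hb, hc]
  ring

def interfaceDefect (p2F rF r2F rr2F g1 g2 : ℝ) : ℝ :=
  2 * g2 * (rF - r2F) ^ 2 + 3 * g2 * r2F ^ 2 + 4 * g1 * rr2F + 2 * p2F

lemma interface_energy_eq {K : ℤ} (h₁ : Dd N u (K - 1) = -2 * Dd N u K)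
    (h₂ : Dd N u (K - 2) = -Dd N u (K - 1)) (h₃ : Dd N u (K - 3) = -Dd N u (K - 2))
    (h₄ : Dd N u (K + 1) = 0) (h₅ : Dd N u (K + 2) = 0) (h₆ : Dd N u (K + 3) = 0) :
    qaAtom N pF p2F rF r2F rrF rr2F g1 g2 u (K - 2)
      + qaAtom N pF p2F rF r2F rrF rr2F g1 g2 u (K - 1)
      + qaAtom N pF p2F rF r2F rrF rr2F g1 g2 u K
      + qiAtom N pF p2F rF r2F rrF rr2F g1 g2 u K (K + 1) (K + 2)
      + qiAtom N pF p2F rF r2F rrF rr2F g1 g2 u (K + 1) (K + 2) (K + 3)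
      = (7 * (pF + 2 * g1 * rrF) + interfaceDefect p2F rF r2F rr2F g1 g2) * Dd N u K ^ 2 := by
  simp only [qaAtom, qiAtom, interfaceDefect, show K - 2 - 1 = K - 3 by ring,
    show K - 2 + 1 = K - 1 by ring, show K - 2 + 2 = K by ring, show K - 1 - 1 = K - 2 by ring,
    show K - 1 + 1 = K by ring, show K - 1 + 2 = K + 1 by ring]
  rw [h₃, h₂, h₁, h₄, h₅, h₆]
  ring

end QuadraticForm

lemma uhatK_isPer (N K : ℤ) : IsPer N (uhatK N K) := by
  intro ℓ
  rw [uhatK, uhatK, add_right_comm, Int.add_emod_right]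

section Oscillation

variable {N K : ℤ} {pF p2F rF r2F rrF rr2F g1 g2 : ℝ}

-- `-N` and `N + 1` wrap around to `N` and `-N + 1`, outside the support once `K < N`.
lemma uhatK_eq_ite (hK : 0 ≤ K) (hKN : K < N) {ℓ : ℤ} (h₁ : -N ≤ ℓ) (h₂ : ℓ ≤ N + 1) :
    uhatK N K ℓ = if |ℓ| ≤ K - 1 then (-1 : ℝ) ^ ℓ * eps N / (2 * √2) else 0 := by
  have window : ∀ m, -N + 1 ≤ m → m ≤ N →
      uhatK N K m = if |m| ≤ K - 1 then (-1 : ℝ) ^ m * eps N / (2 * √2) else 0 := by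
    intro m h₁ h₂
    rw [uhatK, Int.emod_eq_of_lt (by omega) (by omega), add_sub_cancel_right]
  rcases (by omega : ℓ = -N ∨ ℓ = N + 1 ∨ (-N + 1 ≤ ℓ ∧ ℓ ≤ N)) with rfl | rfl | ⟨h₁, h₂⟩
  · rw [← uhatK_isPer, show -N + 2 * N = N by ring, window N (by omega) le_rfl,
      if_neg (by rw [abs_le]; omega), if_neg (by rw [abs_le]; omega)]
  · rw [show N + 1 = -N + 1 + 2 * N by ring, uhatK_isPer, window _ le_rfl (by omega),
      if_neg (by rw [abs_le]; omega), if_neg (by rw [abs_le]; omega)]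
  · exact window ℓ h₁ h₂

lemma uhatK_neg (hK : 0 ≤ K) (hKN : K < N) {ℓ : ℤ} (h₁ : -N ≤ ℓ) (h₂ : ℓ ≤ N) :
    uhatK N K (-ℓ) = uhatK N K ℓ := by
  rw [uhatK_eq_ite hK hKN (by omega) (by omega), uhatK_eq_ite hK hKN h₁ (by omega), abs_neg,
    zpow_neg, ← inv_zpow, inv_neg, inv_one]

lemma Dd_uhatK_reflect (hK : 0 ≤ K) (hKN : K < N) {i j : ℤ} (hij : i + j = 1)
    (h₁ : -N + 1 ≤ j) (h₂ : j ≤ N) : Dd N (uhatK N K) i = -Dd N (uhatK N K) j := by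
  obtain rfl : i = -(j - 1) := by omega
  rw [Dd, Dd, show -(j - 1) - 1 = -j by ring, uhatK_neg hK hKN (by omega) (by omega),
    uhatK_neg hK hKN (by omega) h₂]
  ring

lemma Dd_uhatK_of_interior (hKN : K < N) {j : ℤ} (h₁ : -K + 2 ≤ j) (h₂ : j ≤ K - 1) :
    Dd N (uhatK N K) j = (-1) ^ j / √2 := by
  have h2 : √2 ≠ 0 := by positivity
  have hε := eps_ne_zero (N := N) (by omega)
  rw [Dd, uhatK_eq_ite (by omega) hKN (by omega) (by omega),
    uhatK_eq_ite (by omega) hKN (by omega) (by omega), if_pos (by rw [abs_le]; omega),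
    if_pos (by rw [abs_le]; omega), ← neg_neg ((-1 : ℝ) ^ (j - 1)), ← neg_one_zpow_add_one,
    sub_add_cancel]
  field_simp
  ring

lemma Dd_uhatK_self (hK : 1 ≤ K) (hKN : K < N) :
    Dd N (uhatK N K) K = (-1) ^ K / (2 * √2) := by
  have h2 : √2 ≠ 0 := by positivity
  have hε := eps_ne_zero (N := N) (by omega)
  rw [Dd, uhatK_eq_ite (by omega) hKN (by omega) (by omega),
    uhatK_eq_ite (by omega) hKN (by omega) (by omega), if_neg (by rw [abs_le]; omega),
    if_pos (by rw [abs_le]; omega), ← neg_neg ((-1 : ℝ) ^ (K - 1)), ← neg_one_zpow_add_one,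
    sub_add_cancel]
  field_simp
  ring

lemma Dd_uhatK_of_exterior (hK : 0 ≤ K) (hKN : K < N) {j : ℤ}
    (hj : (K + 1 ≤ j ∧ j ≤ N + 1) ∨ (-N + 1 ≤ j ∧ j ≤ -K)) : Dd N (uhatK N K) j = 0 := by
  rw [Dd, uhatK_eq_ite hK hKN (by omega) (by omega), uhatK_eq_ite hK hKN (by omega) (by omega),
    if_neg (by rw [abs_le]; omega), if_neg (by rw [abs_le]; omega), sub_self, zero_div]

lemma Dd_uhatK_alternate (hKN : K < N) {i j : ℤ} (hij : i + 1 = j) (hi : -K + 2 ≤ i)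
    (hj : j ≤ K - 1) : Dd N (uhatK N K) i = -Dd N (uhatK N K) j := by
  subst hij
  rw [Dd_uhatK_of_interior hKN hi (by omega), Dd_uhatK_of_interior hKN (by omega) hj,
    neg_one_zpow_add_one, neg_div, neg_neg]

lemma Dd_uhatK_sq_of_interior (hKN : K < N) {j : ℤ} (h₁ : -K + 2 ≤ j) (h₂ : j ≤ K - 1) :
    Dd N (uhatK N K) j ^ 2 = 1 / 2 := by
  rw [Dd_uhatK_of_interior hKN h₁ h₂, div_pow, neg_one_zpow_sq, Real.sq_sqrt zero_le_two]

lemma Dd_uhatK_self_sq (hK : 1 ≤ K) (hKN : K < N) : Dd N (uhatK N K) K ^ 2 = 1 / 8 := by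
  rw [Dd_uhatK_self hK hKN, div_pow, neg_one_zpow_sq, mul_pow, Real.sq_sqrt zero_le_two]
  norm_num

lemma Dd_uhatK_sub_one_self (hK : 2 ≤ K) (hKN : K < N) :
    Dd N (uhatK N K) (K - 1) = -2 * Dd N (uhatK N K) K := by
  have h2 : √2 ≠ 0 := by positivity
  rw [Dd_uhatK_of_interior hKN (by omega) le_rfl, Dd_uhatK_self (by omega) hKN,
    ← sub_add_cancel K 1, neg_one_zpow_add_one, add_sub_cancel_right]
  field_simp

lemma nrm2_Dd_uhatK (hK : 1 ≤ K) (hKN : K < N) :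
    nrm2 N (Dd N (uhatK N K)) = eps N * (K - 1) + eps N / 4 := by
  have hsupp : ∑ ℓ ∈ Icc (-N + 1) N, Dd N (uhatK N K) ℓ ^ 2
      = ∑ ℓ ∈ Icc (-K + 1) K, Dd N (uhatK N K) ℓ ^ 2 := by
    refine (sum_subset (Icc_subset_Icc (by omega) (by omega)) fun j hj hj' => ?_).symm
    simp only [mem_Icc] at hj hj'
    rw [Dd_uhatK_of_exterior (by omega) hKN (by omega), sq, mul_zero]
  have hsplit : Icc (-K + 1) K = insert (-K + 1) (insert K (Icc (-K + 2) (K - 1))) := by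
    ext x
    simp only [mem_insert, mem_Icc]
    omega
  have hinterior : ∑ ℓ ∈ Icc (-K + 2) (K - 1), Dd N (uhatK N K) ℓ ^ 2
      = ((K - 1 : ℤ) + 1 - (-K + 2 : ℤ) : ℝ) * (1 / 2) :=
    sum_Icc_eq_of_forall_eq (by omega) fun ℓ hℓ => by
      rw [mem_Icc] at hℓ
      exact Dd_uhatK_sq_of_interior hKN hℓ.1 hℓ.2
  rw [nrm2, hsupp, hsplit, sum_insert (by simp only [mem_insert, mem_Icc]; omega),
    sum_insert (by simp only [mem_Icc]; omega), hinterior,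
    Dd_uhatK_reflect (by omega) hKN (j := K) (by ring) (by omega) hKN.le, neg_sq,
    Dd_uhatK_self_sq hK hKN]
  push_cast
  ring

lemma sum_qaAtom_uhatK_interior (hK : 3 ≤ K) (hKN : K < N) :
    ∑ ℓ ∈ Icc (-K + 3) (K - 3), qaAtom N pF p2F rF r2F rrF rr2F g1 g2 (uhatK N K) ℓ
      = ((K - 3 : ℤ) + 1 - (-K + 3 : ℤ) : ℝ) * ((pF + 2 * g1 * rrF) * (1 / 2)) :=
  sum_Icc_eq_of_forall_eq (by omega) fun ℓ hℓ => by
    rw [mem_Icc] at hℓ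
    rw [qaAtom_of_alternating (Dd_uhatK_alternate hKN (by ring) (by omega) (by omega))
      (Dd_uhatK_alternate hKN rfl (by omega) (by omega))
      (Dd_uhatK_alternate hKN (by ring) (by omega) (by omega)),
      Dd_uhatK_sq_of_interior hKN (by omega) (by omega)]

lemma sum_qcAtom_uhatK (hK : 0 ≤ K) (hKN : K < N) :
    ∑ ℓ ∈ Icc (-N + 1) (-K - 3) ∪ Icc (K + 3) N,
      qcAtom N pF p2F rF r2F rrF rr2F g1 g2 (uhatK N K) ℓ = 0 :=
  sum_eq_zero fun ℓ hℓ => by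
    simp only [mem_union, mem_Icc] at hℓ
    rw [qcAtom, Dd_uhatK_of_exterior hK hKN (by omega), Dd_uhatK_of_exterior hK hKN (by omega)]
    ring

lemma right_interface_energy_uhatK (hK : 3 ≤ K) (hKN : K + 3 ≤ N) :
    qaAtom N pF p2F rF r2F rrF rr2F g1 g2 (uhatK N K) (K - 2)
      + qaAtom N pF p2F rF r2F rrF rr2F g1 g2 (uhatK N K) (K - 1)
      + qaAtom N pF p2F rF r2F rrF rr2F g1 g2 (uhatK N K) K
      + qiAtom N pF p2F rF r2F rrF rr2F g1 g2 (uhatK N K) K (K + 1) (K + 2)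
      + qiAtom N pF p2F rF r2F rrF rr2F g1 g2 (uhatK N K) (K + 1) (K + 2) (K + 3)
      = (7 * (pF + 2 * g1 * rrF) + interfaceDefect p2F rF r2F rr2F g1 g2) / 8 := by
  rw [interface_energy_eq (Dd_uhatK_sub_one_self (by omega) (by omega))
    (Dd_uhatK_alternate (by omega) (by ring) (by omega) le_rfl)
    (Dd_uhatK_alternate (by omega) (by ring) (by omega) (by omega))
    (Dd_uhatK_of_exterior (by omega) (by omega) (by omega))
    (Dd_uhatK_of_exterior (by omega) (by omega) (by omega))
    (Dd_uhatK_of_exterior (by omega) (by omega) (by omega)),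
    Dd_uhatK_self_sq (by omega) (by omega)]
  ring

lemma left_interface_energy_uhatK (hK : 3 ≤ K) (hKN : K + 3 ≤ N) :
    qaAtom N pF p2F rF r2F rrF rr2F g1 g2 (uhatK N K) (-K)
      + qaAtom N pF p2F rF r2F rrF rr2F g1 g2 (uhatK N K) (-K + 1)
      + qaAtom N pF p2F rF r2F rrF rr2F g1 g2 (uhatK N K) (-K + 2)
      + qiAtom N pF p2F rF r2F rrF rr2F g1 g2 (uhatK N K) (-K + 1) (-K) (-K - 1)
      + qiAtom N pF p2F rF r2F rrF rr2F g1 g2 (uhatK N K) (-K) (-K - 1) (-K - 2)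
      = qaAtom N pF p2F rF r2F rrF rr2F g1 g2 (uhatK N K) (K - 2)
      + qaAtom N pF p2F rF r2F rrF rr2F g1 g2 (uhatK N K) (K - 1)
      + qaAtom N pF p2F rF r2F rrF rr2F g1 g2 (uhatK N K) K
      + qiAtom N pF p2F rF r2F rrF rr2F g1 g2 (uhatK N K) K (K + 1) (K + 2)
      + qiAtom N pF p2F rF r2F rrF rr2F g1 g2 (uhatK N K) (K + 1) (K + 2) (K + 3) := by
  have reflect : ∀ {i j : ℤ}, i + j = 1 → K - 3 ≤ j → j ≤ K + 3 →
      Dd N (uhatK N K) i = -Dd N (uhatK N K) j :=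
    fun hij h₁ h₂ => Dd_uhatK_reflect (by omega) (by omega) hij (by omega) (by omega)
  rw [qaAtom_eq_of_reflect (ℓ := K) (m := -K) (reflect (by ring) (by omega) (by omega))
      (reflect (by ring) (by omega) (by omega)) (reflect (by ring) (by omega) (by omega))
      (reflect (by ring) (by omega) (by omega)),
    qaAtom_eq_of_reflect (ℓ := K - 1) (m := -K + 1) (reflect (by ring) (by omega) (by omega))
      (reflect (by ring) (by omega) (by omega)) (reflect (by ring) (by omega) (by omega))
      (reflect (by ring) (by omega) (by omega)),
    qaAtom_eq_of_reflect (ℓ := K - 2) (m := -K + 2) (reflect (by ring) (by omega) (by omega))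
      (reflect (by ring) (by omega) (by omega)) (reflect (by ring) (by omega) (by omega))
      (reflect (by ring) (by omega) (by omega)),
    qiAtom_eq_of_neg (a := K) (b := K + 1) (c := K + 2) (a' := -K + 1) (b' := -K) (c' := -K - 1)
      (reflect (by ring) (by omega) (by omega)) (reflect (by ring) (by omega) (by omega))
      (reflect (by ring) (by omega) (by omega)),
    qiAtom_eq_of_neg (a := K + 1) (b := K + 2) (c := K + 3) (a' := -K) (b' := -K - 1)
      (c' := -K - 2) (reflect (by ring) (by omega) (by omega))
      (reflect (by ring) (by omega) (by omega)) (reflect (by ring) (by omega) (by omega))]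
  ring

lemma Qqnl_uhatK (hK : 3 ≤ K) (hKN : K + 3 ≤ N) :
    Qqnl N K pF p2F rF r2F rrF rr2F g1 g2 (uhatK N K) = eps N *
      ((4 * K - 3) * (pF + 2 * g1 * rrF) + interfaceDefect p2F rF r2F rr2F g1 g2) / 4 := by
  rw [Qqnl, sum_Icc_neg_self_eq hK, sum_qaAtom_uhatK_interior hK (by omega),
    sum_qcAtom_uhatK (by omega) (by omega)]
  push_cast
  have hleft := left_interface_energy_uhatK (pF := pF) (p2F := p2F) (rF := rF) (r2F := r2F)
    (rrF := rrF) (rr2F := rr2F) (g1 := g1) (g2 := g2) hK hKN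
  have hright := right_interface_energy_uhatK (pF := pF) (p2F := p2F) (rF := rF) (r2F := r2F)
    (rrF := rrF) (rr2F := rr2F) (g1 := g1) (g2 := g2) hK hKN
  linear_combination eps N * hleft + 2 * eps N * hright

lemma rayleigh_quotient_uhatK (hK : 3 ≤ K) (hKN : K + 3 ≤ N) :
    Qqnl N K pF p2F rF r2F rrF rr2F g1 g2 (uhatK N K) / nrm2 N (Dd N (uhatK N K))
      = pF + 2 * g1 * rrF + interfaceDefect p2F rF r2F rr2F g1 g2 / (4 * K - 3) := by
  have hε : eps N ≠ 0 := eps_ne_zero (by omega)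
  have hK' : (4 : ℝ) * K - 3 ≠ 0 := by
    have : (3 : ℝ) ≤ K := by exact_mod_cast hK
    linarith
  rw [Qqnl_uhatK hK hKN, nrm2_Dd_uhatK (by omega) (by omega),
    show eps N * (K - 1) + eps N / 4 = eps N * (4 * K - 3) / 4 by ring,
    div_div_div_cancel_right₀ four_ne_zero, mul_div_mul_left _ _ hε, add_div,
    mul_div_cancel_left₀ _ hK']

end Oscillation

/-- the QNL Rayleigh quotient of `û` is `φ''_F + 2G'_F ρ''_F + O(1/K)`. -/
theorem qnl_rayleigh_quotient_estimate (pF p2F rF r2F rrF rr2F g1 g2 : ℝ) :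
    ∃ c : ℝ, 0 ≤ c ∧ ∀ N K : ℤ, 3 ≤ K → K + 3 ≤ N →
      nrm2 N (Dd N (uhatK N K)) = eps N * ((K:ℝ) - 1) + eps N / 4 ∧
      |Qqnl N K pF p2F rF r2F rrF rr2F g1 g2 (uhatK N K) / nrm2 N (Dd N (uhatK N K))
          - (pF + 2*g1*rrF)| ≤ c / (K:ℝ) := by
  refine ⟨|interfaceDefect p2F rF r2F rr2F g1 g2|, abs_nonneg _, fun N K hK hKN =>
    ⟨nrm2_Dd_uhatK (by omega) (by omega), ?_⟩⟩
  have hK' : (3 : ℝ) ≤ K := by exact_mod_cast hK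
  rw [rayleigh_quotient_uhatK hK hKN, add_sub_cancel_left, abs_div,
    abs_of_pos (a := 4 * (K : ℝ) - 3) (by linarith)]
  exact div_le_div_of_nonneg_left (abs_nonneg _) (by linarith) (by linarith)
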